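/- arXiv:math/0403140 — 2 statements merged into one kernel-verified Lean document; each statement's English description precedes it below -/
import Mathlib

section
/- Let G be a group in which roots are unique, i.e., for every positive integer n and all x, y ∈ G, if x^n = y^n then x = y. Let H be a subgroup of G of finite index, and let α : G ≃* G be a group automorphism whose restriction to H is the identity (α h = h for all h ∈ H). Then α is the identity automorphism of G, i.e., α x = x for all x ∈ G. -/
theorem auto_fixing_finite_index_subgroup_is_id
    {G : Type*} [Group G]
    (hroots : ∀ (n : ℕ), 0 < n → ∀ x y : G, x ^ n = y ^ n → x = y)
    (H : Subgroup G) (hH : H.index ≠ 0)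
    (α : G ≃* G) (hα : ∀ h ∈ H, α h = h) :
    ∀ x : G, α x = x := by
  intro x
  obtain ⟨n, hn, -, hmem⟩ := Subgroup.exists_pow_mem_of_index_ne_zero hH x
  exact hroots n hn _ _ (by rw [← map_pow, hα _ hmem])
end

section
/- Let G be a group in which roots are unique, i.e., for every positive integer n and all x, y ∈ G, if x^n = y^n then x = y. Let H be a subgroup of G of finite index, and let α : G →* G be a group homomorphism whose restriction to H is the identity (α h = h for all h ∈ H). Then α x = x for all x ∈ G. -/
theorem hom_fixing_finite_index_subgroup_is_id
    {G : Type*} [Group G]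
    (hroots : ∀ (n : ℕ), 0 < n → ∀ x y : G, x ^ n = y ^ n → x = y)
    (H : Subgroup G) (hH : H.index ≠ 0)
    (α : G →* G) (hα : ∀ h ∈ H, α h = h) :
    ∀ x : G, α x = x := by
  intro x
  obtain ⟨n, hlt, _, hmem⟩ := Subgroup.exists_pow_mem_of_index_ne_zero hH x
  exact hroots n hlt _ _ (by rw [← map_pow, hα _ hmem])
end
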